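/- In a Hamming graph G = ∏_{i=1}^t K_{n_i} with all thresholds equal to 2, for any vertex x and subsets A, B of {1,…,t}, the activation closure of x_A ∪ x_B equals x_{A ∩ B}, where x_C denotes the set of vertices agreeing with x on all coordinates in C. -/

import Mathlib

/-!
A subcube `x_C` is closed under threshold-2 activation: a vertex `v ∉ x_C` differs from `x` at
some `i ∈ C`, so its only possible neighbour in `x_C` is `v` with coordinate `i` reset to `x i`.
Conversely, take `z ∈ x_{A ∩ B}` outside `x_A ∪ x_B`, with `z i ≠ x i` for some `i ∈ A` and
`z j ≠ x j` for some `j ∈ B`; then `i ≠ j`, and resetting coordinate `i` or `j` of `z` to `x`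
gives two distinct neighbours of `z` in `x_{A ∩ B}` that are closer to `x`. By induction on the
Hamming distance to `x` both are activated, hence so is `z`.
-/

/-- The Hamming graph `∏ K_{n i}`: vertices are tuples, adjacent iff they differ
in exactly one coordinate (Hamming distance 1). -/
def hammingGraph {t : ℕ} (n : Fin t → ℕ) : SimpleGraph (Π i, Fin (n i)) where
  Adj x y := hammingDist x y = 1
  symm := ⟨fun x y h => (hammingDist_comm y x).trans h⟩
  loopless := ⟨fun x h => by simp [hammingDist_self] at h⟩

/-- The "subcube" `x_A`: all vertices agreeing with `x` on every coordinate in `A`. -/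
def subcube {t : ℕ} {n : Fin t → ℕ} (x : Π i, Fin (n i)) (A : Set (Fin t)) :
    Set (Π i, Fin (n i)) :=
  {z | ∀ i ∈ A, z i = x i}

/-- A set `A` is closed under activation: every vertex with at least `θ v`
neighbors in `A` already belongs to `A`. -/
def activationClosed {V : Type*} [Fintype V] (G : SimpleGraph V) (θ : V → ℤ)
    (A : Set V) : Prop :=
  ∀ v : V, θ v ≤ ((A ∩ G.neighborSet v).ncard : ℤ) → v ∈ A

/-- The activation closure `[S]_θ`: the smallest activation-closed superset of `S`. -/
def activationClosure {V : Type*} [Fintype V] (G : SimpleGraph V) (θ : V → ℤ)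
    (S : Set V) : Set V :=
  ⋂₀ {A : Set V | S ⊆ A ∧ activationClosed G θ A}

section ActivationClosure

variable {V : Type*} [Fintype V] (G : SimpleGraph V) (θ : V → ℤ)

lemma subset_activationClosure (S : Set V) : S ⊆ activationClosure G θ S :=
  fun _ hv _ hA => hA.1 hv

lemma activationClosure_subset {S A : Set V} (hS : S ⊆ A) (hA : activationClosed G θ A) :
    activationClosure G θ S ⊆ A :=
  fun _ hv => hv A ⟨hS, hA⟩

lemma activationClosed_activationClosure (S : Set V) :
    activationClosed G θ (activationClosure G θ S) := by
  intro v hv A hA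
  refine hA.2 v (hv.trans ?_)
  exact_mod_cast Set.ncard_le_ncard
    (Set.inter_subset_inter_left _ (activationClosure_subset G θ hA.1 hA.2)) (Set.toFinite _)

lemma mem_activationClosure_of_adj_of_adj {S : Set V} {v u w : V} (hθ : θ v ≤ 2)
    (hu : u ∈ activationClosure G θ S) (hw : w ∈ activationClosure G θ S) (huw : u ≠ w)
    (hvu : G.Adj v u) (hvw : G.Adj v w) : v ∈ activationClosure G θ S := by
  refine activationClosed_activationClosure G θ S v (hθ.trans ?_)
  have hpair : {u, w} ⊆ activationClosure G θ S ∩ G.neighborSet v := by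
    rintro y (rfl | rfl)
    exacts [⟨hu, hvu⟩, ⟨hw, hvw⟩]
  exact_mod_cast (Set.ncard_pair huw).symm.le.trans (Set.ncard_le_ncard hpair (Set.toFinite _))

end ActivationClosure

section HammingDist

variable {ι : Type*} [Fintype ι] [DecidableEq ι] {β : ι → Type*} [∀ i, DecidableEq (β i)]

lemma hammingDist_update_self {z : ∀ i, β i} {i : ι} {a : β i} (ha : a ≠ z i) :
    hammingDist (Function.update z i a) z = 1 := by
  refine Finset.card_eq_one.mpr ⟨i, Finset.eq_singleton_iff_unique_mem.mpr ⟨?_, ?_⟩⟩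
  · simpa using ha
  · intro k hk
    by_contra hki
    simp [Function.update_of_ne hki] at hk

lemma hammingDist_update_lt {z y : ∀ i, β i} {i : ι} (hi : z i ≠ y i) :
    hammingDist (Function.update z i (y i)) y < hammingDist z y := by
  refine Finset.card_lt_card (Finset.ssubset_iff_of_subset ?_ |>.mpr ⟨i, ?_, ?_⟩)
  · intro k hk
    by_cases hki : k = i
    · simp [hki] at hk
    · simpa [Function.update_of_ne hki] using hk
  · simpa using hi
  · simp

lemma eq_update_of_hammingDist_eq_one {z v : ∀ i, β i} (h : hammingDist z v = 1) {i : ι}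
    (hi : z i ≠ v i) : z = Function.update v i (z i) := by
  obtain ⟨j, hj⟩ := Finset.card_eq_one.mp h
  have mem_iff : ∀ k, z k ≠ v k ↔ k = j := fun k => by
    simpa using congrArg (k ∈ ·) hj
  funext k
  by_cases hki : k = i
  · subst hki; simp
  · rw [Function.update_of_ne hki]
    by_contra hk
    exact hki (((mem_iff k).mp hk).trans ((mem_iff i).mp hi).symm)

end HammingDist

section Subcube

variable {t : ℕ} {n : Fin t → ℕ}

lemma subcube_anti (x : Π i, Fin (n i)) {C D : Set (Fin t)} (h : C ⊆ D) :
    subcube x D ⊆ subcube x C :=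
  fun _ hz i hi => hz i (h hi)

lemma update_mem_subcube {x z : Π i, Fin (n i)} {C : Set (Fin t)} (hz : z ∈ subcube x C)
    (i : Fin t) : Function.update z i (x i) ∈ subcube x C := by
  intro k hk
  by_cases hki : k = i
  · subst hki; simp
  · rw [Function.update_of_ne hki]; exact hz k hk

lemma ncard_subcube_inter_neighborSet_le_one {x v : Π i, Fin (n i)} {C : Set (Fin t)}
    (hv : v ∉ subcube x C) : (subcube x C ∩ (hammingGraph n).neighborSet v).ncard ≤ 1 := by
  obtain ⟨i, hiC, hvi⟩ : ∃ i ∈ C, v i ≠ x i := by simpa [subcube] using hv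
  have hsub : subcube x C ∩ (hammingGraph n).neighborSet v ⊆ {Function.update v i (x i)} := by
    rintro z ⟨hzC, hvz⟩
    have hzi : z i = x i := hzC i hiC
    have hadj : (hammingGraph n).Adj z v := hvz.symm
    rw [Set.mem_singleton_iff, ← hzi]
    exact eq_update_of_hammingDist_eq_one hadj (hzi ▸ hvi.symm)
  exact (Set.ncard_le_ncard hsub).trans (Set.ncard_singleton _).le

lemma activationClosed_subcube (x : Π i, Fin (n i)) (C : Set (Fin t)) :
    activationClosed (hammingGraph n) (fun _ => 2) (subcube x C) := by
  intro v hv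
  by_contra hvC
  have := ncard_subcube_inter_neighborSet_le_one hvC
  simp only at hv
  omega

lemma subcube_inter_subset_activationClosure (x : Π i, Fin (n i)) (A B : Set (Fin t)) :
    subcube x (A ∩ B) ⊆
      activationClosure (hammingGraph n) (fun _ => 2) (subcube x A ∪ subcube x B) := by
  intro z hz
  induction hd : hammingDist z x using Nat.strong_induction_on generalizing z with
  | _ d ih =>
  by_cases hzA : z ∈ subcube x A
  · exact subset_activationClosure _ _ _ (Or.inl hzA)
  by_cases hzB : z ∈ subcube x B
  · exact subset_activationClosure _ _ _ (Or.inr hzB)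
  obtain ⟨i, hiA, hzi⟩ : ∃ i ∈ A, z i ≠ x i := by simpa [subcube] using hzA
  obtain ⟨j, hjB, hzj⟩ : ∃ j ∈ B, z j ≠ x j := by simpa [subcube] using hzB
  have hij : i ≠ j := fun h => hzj (h ▸ hz i ⟨hiA, h ▸ hjB⟩)
  have reset_mem : ∀ k, z k ≠ x k → Function.update z k (x k) ∈
      activationClosure (hammingGraph n) (fun _ => 2) (subcube x A ∪ subcube x B) :=
    fun k hk => ih _ (hd ▸ hammingDist_update_lt hk) (update_mem_subcube hz k) rfl
  have hne : Function.update z i (x i) ≠ Function.update z j (x j) := fun h => hzj <| by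
    simpa [Function.update_of_ne hij.symm] using congrFun h j
  exact mem_activationClosure_of_adj_of_adj _ _ le_rfl (reset_mem i hzi) (reset_mem j hzj) hne
    (SimpleGraph.Adj.symm (hammingDist_update_self hzi.symm))
    (SimpleGraph.Adj.symm (hammingDist_update_self hzj.symm))

end Subcube

theorem closure_subcube_union_subcube_general {t : ℕ} (n : Fin t → ℕ)
    (x : Π i, Fin (n i)) (A B : Set (Fin t)) :
    activationClosure (hammingGraph n) (fun _ => (2 : ℤ))
      (subcube x A ∪ subcube x B) = subcube x (A ∩ B) := by
  refine (activationClosure_subset _ _ ?_ (activationClosed_subcube x (A ∩ B))).antisymm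
    (subcube_inter_subset_activationClosure x A B)
  exact Set.union_subset (subcube_anti x Set.inter_subset_left)
    (subcube_anti x Set.inter_subset_right)

theorem closure_subcube_union_subcube {t : ℕ} (n : Fin t → ℕ) (hn : ∀ i, 2 ≤ n i)
    (x : Π i, Fin (n i)) (A B : Set (Fin t)) :
    activationClosure (hammingGraph n) (fun _ => (2 : ℤ))
      (subcube x A ∪ subcube x B) = subcube x (A ∩ B) :=
  closure_subcube_union_subcube_general n x A B
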